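/- arXiv:2007.14460 — 2 statements merged into one kernel-verified Lean document; each statement's English description precedes it below -/
import Mathlib

section
/- For any Hermitian matrix h of size N×N, the Schatten 1-norm (sum of absolute values of eigenvalues) is at most the entrywise 1-norm: ∑ₖ |σₖ| ≤ ∑_{j,k} |h_{jk}|. -/
/-!
If `h = U diag(σ) U*` and `S = U diag(±1) U*` with the signs of the `σₖ`, then `S` is unitary and
`tr(h S) = ∑ₖ |σₖ|`. Entries of a unitary matrix have modulus at most `1`, so
`|tr(h S)| = |∑_{j,k} h_{jk} S_{kj}| ≤ ∑_{j,k} |h_{jk}|`.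
-/

namespace Matrix

theorem norm_trace_mul_le_sum_norm {R m n : Type*} [SeminormedRing R] [Fintype m] [Fintype n]
    (A : Matrix m n R) (S : Matrix n m R) (hS : ∀ i j, ‖S i j‖ ≤ 1) :
    ‖(A * S).trace‖ ≤ ∑ i, ∑ j, ‖A i j‖ :=
  calc ‖(A * S).trace‖ = ‖∑ i, ∑ j, A i j * S j i‖ := by simp only [trace, diag, mul_apply]
    _ ≤ ∑ i, ∑ j, ‖A i j * S j i‖ := norm_sum_le_of_le _ fun i _ => norm_sum_le _ _
    _ ≤ ∑ i, ∑ j, ‖A i j‖ := by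
      gcongr with i _ j _
      exact (norm_mul_le _ _).trans (mul_le_of_le_one_right (norm_nonneg _) (hS j i))

theorem diagonal_mem_unitaryGroup {R n : Type*} [CommRing R] [StarRing R] [Fintype n]
    [DecidableEq n] {d : n → R} (hd : ∀ i, star (d i) * d i = 1) :
    diagonal d ∈ unitaryGroup n R := by
  rw [mem_unitaryGroup_iff', star_eq_conjTranspose, diagonal_conjTranspose,
    diagonal_mul_diagonal, diagonal_eq_one]
  exact funext hd

theorem IsHermitian.exists_unitary_trace_mul_eq_sum_abs_eigenvalues {𝕜 n : Type*} [RCLike 𝕜]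
    [Fintype n] [DecidableEq n] {A : Matrix n n 𝕜} (hA : A.IsHermitian) :
    ∃ S ∈ unitaryGroup n 𝕜, (A * S).trace = ((∑ k, |hA.eigenvalues k| : ℝ) : 𝕜) := by
  set U : Matrix n n 𝕜 := (hA.eigenvectorUnitary : Matrix n n 𝕜)
  -- `±1` rather than `Real.sign`, which vanishes at `0` and would spoil unitarity
  let sgn : n → ℝ := fun k => if hA.eigenvalues k < 0 then -1 else 1
  have hsgn : ∀ k, star (sgn k : 𝕜) * sgn k = 1 := fun k => by
    simp only [sgn, RCLike.star_def, RCLike.conj_ofReal]; split_ifs <;> simp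
  have habs : ∀ k, |hA.eigenvalues k| = hA.eigenvalues k * sgn k := fun k => by
    simp only [sgn]; split_ifs with h
    · rw [abs_of_neg h, mul_neg_one]
    · rw [abs_of_nonneg (not_lt.mp h), mul_one]
  have hdiag : star U * A * U = diagonal (RCLike.ofReal ∘ hA.eigenvalues) := by
    simpa using hA.conjStarAlgAut_star_eigenvectorUnitary
  refine ⟨U * diagonal (RCLike.ofReal ∘ sgn) * star U,
    mul_mem (mul_mem hA.eigenvectorUnitary.2 (diagonal_mem_unitaryGroup hsgn))
      (Unitary.star_mem hA.eigenvectorUnitary.2), ?_⟩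
  calc (A * (U * diagonal (RCLike.ofReal ∘ sgn) * star U)).trace
      = (star U * A * U * diagonal (RCLike.ofReal ∘ sgn)).trace := by
        rw [Matrix.mul_assoc (star U * A), Matrix.mul_assoc (star U), trace_mul_comm (star U),
          Matrix.mul_assoc A]
    _ = ((∑ k, |hA.eigenvalues k| : ℝ) : 𝕜) := by
        rw [hdiag, diagonal_mul_diagonal, trace_diagonal]
        simp [habs]

end Matrix

/-- For any Hermitian matrix `h` of size `N × N`, the Schatten 1-norm
(sum of absolute values of eigenvalues) is at most the entrywise 1-norm. -/
theorem schatten_one_norm_le_entrywise_one_norm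
    (N : ℕ) (h : Matrix (Fin N) (Fin N) ℂ) (hh : h.IsHermitian) :
    ∑ k, |hh.eigenvalues k| ≤ ∑ j, ∑ k, ‖h j k‖ := by
  obtain ⟨S, hS, htrace⟩ := hh.exists_unitary_trace_mul_eq_sum_abs_eigenvalues
  calc ∑ k, |hh.eigenvalues k| = ‖(h * S).trace‖ := by
        rw [htrace, RCLike.norm_ofReal, abs_of_nonneg (by positivity)]
    _ ≤ ∑ j, ∑ k, ‖h j k‖ := h.norm_trace_mul_le_sum_norm S (entry_norm_bound_of_unitary hS)
end

section
/- If B is a block-encoding of H with ‖H‖ ≤ 1 (i.e., ⟨0|_a B |0⟩_a = H), then two applications of B and its inverse with one intervening reflection on the ancilla register yield a block-encoding of T₂[H] = 2H² − I, the degree-2 Chebyshev polynomial of H. -/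
/-!
Writing the ancilla reflection as `REF = 2P - 1`, with `P = |z⟩⟨z|_a ⊗ I_s`, and noting that `REF`
fixes the rows of the `z` ancilla block, the `(z, z)` block of `(REF·B)²` is that of
`B·REF·B = 2·B·P·B - B²`. The projector `P` cuts the product `B·P·B` down to the product of the
`(z, z)` blocks, i.e. `H²`, while `B² = B·Bᴴ = 1` for a Hermitian unitary `B`.
-/

open Matrix

namespace Matrix

theorem mul_self_eq_one_of_isHermitian {n R : Type*} [Fintype n] [DecidableEq n] [CommRing R]
    [StarRing R] {B : Matrix n n R} (hBu : B ∈ unitaryGroup n R) (hBh : B.IsHermitian) :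
    B * B = 1 := by
  simpa [star_eq_conjTranspose, hBh.eq] using mem_unitaryGroup_iff.mp hBu

section AncillaBlock

variable {α σ R : Type*} [DecidableEq α] [DecidableEq σ]

def ancillaProjector [Zero R] [One R] (z : α) : Matrix (α × σ) (α × σ) R :=
  diagonal fun p => if p.1 = z then 1 else 0

theorem submatrix_mul_ancillaProjector_mul [Fintype α] [Fintype σ] [NonAssocSemiring R] (z : α)
    (A C : Matrix (α × σ) (α × σ) R) :
    (A * ancillaProjector z * C).submatrix (Prod.mk z) (Prod.mk z) =
      A.submatrix (Prod.mk z) (Prod.mk z) * C.submatrix (Prod.mk z) (Prod.mk z) := by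
  ext j k
  rw [submatrix_apply, mul_apply, mul_apply, Fintype.sum_prod_type,
    Finset.sum_eq_single z (fun a _ ha => by simp [ancillaProjector, ha]) (by simp)]
  simp [ancillaProjector]

theorem ancillaReflection_eq [Ring R] (z : α) :
    (diagonal fun p : α × σ => if p.1 = z then (1 : R) else -1) =
      (2 : R) • ancillaProjector z - 1 := by
  ext p q
  simp only [ancillaProjector, diagonal_apply, sub_apply, smul_apply, one_apply]
  split_ifs <;> norm_num

end AncillaBlock

end Matrix

theorem qubitization_chebyshev_two_general
    {α σ : Type*} [Fintype α] [Fintype σ] [DecidableEq α] [DecidableEq σ]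
    (z : α)
    (B : Matrix (α × σ) (α × σ) ℂ)
    (hBu : B ∈ Matrix.unitaryGroup (α × σ) ℂ)
    (hBh : B.IsHermitian)
    (H : Matrix σ σ ℂ)
    (hH : ∀ j k, H j k = B (z, j) (z, k)) :
    let REF : Matrix (α × σ) (α × σ) ℂ :=
      Matrix.diagonal fun p => if p.1 = z then 1 else -1
    let W := REF * B
    ∀ j k, (W * W) (z, j) (z, k) = ((2 : ℂ) • (H * H) - 1) j k := by
  intro REF W j k
  have hBB : B * B = 1 := mul_self_eq_one_of_isHermitian hBu hBh
  have hblock : B.submatrix (Prod.mk z) (Prod.mk z) = H := by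
    ext j k
    exact (hH j k).symm
  have hREF : REF = (2 : ℂ) • ancillaProjector z - 1 := ancillaReflection_eq z
  have hfix : (W * W) (z, j) (z, k) = (B * REF * B) (z, j) (z, k) := by
    simp [W, REF, Matrix.mul_assoc, diagonal_mul]
  have hsandwich : B * REF * B = (2 : ℂ) • (B * ancillaProjector z * B) - 1 := by
    rw [hREF, Matrix.mul_sub, Matrix.sub_mul, Matrix.mul_one, hBB, Matrix.mul_smul,
      Matrix.smul_mul]
  have hcorner : (B * REF * B).submatrix (Prod.mk z) (Prod.mk z) = (2 : ℂ) • (H * H) - 1 := by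
    rw [← hblock, ← submatrix_mul_ancillaProjector_mul,
      ← submatrix_one (Prod.mk z) (Prod.mk_right_injective z), hsandwich]
    rfl
  exact hfix.trans (congrFun (congrFun hcorner j) k)

/-- Qubitization: if the Hermitian unitary `B` block-encodes `H` with `‖H‖ ≤ 1`
(`H = ⟨0|_a B |0⟩_a`), then two applications of `B` with an intervening reflection
`REF = (2|0⟩⟨0|_a − I_a) ⊗ I_s` on the ancilla register block-encode the degree-2
Chebyshev polynomial `T₂[H] = 2H² − I`: the `(0,0)`-ancilla block of
`W² = (REF·B)²` equals `2H² − 1`. -/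
theorem qubitization_chebyshev_two
    {α σ : Type*} [Fintype α] [Fintype σ] [DecidableEq α] [DecidableEq σ]
    (z : α)
    (B : Matrix (α × σ) (α × σ) ℂ)
    (hBu : B ∈ Matrix.unitaryGroup (α × σ) ℂ)
    (hBh : B.IsHermitian)
    (H : Matrix σ σ ℂ)
    (hH : ∀ j k, H j k = B (z, j) (z, k))
    (hHnorm : ‖Matrix.toEuclideanCLM (𝕜 := ℂ) (n := σ) H‖ ≤ 1) :
    let REF : Matrix (α × σ) (α × σ) ℂ :=
      Matrix.diagonal fun p => if p.1 = z then 1 else -1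
    let W := REF * B
    ∀ j k, (W * W) (z, j) (z, k) = ((2 : ℂ) • (H * H) - 1) j k :=
  qubitization_chebyshev_two_general z B hBu hBh H hH
end
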